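/- Let V be a real vector space equipped with two inner products ⟨·,·⟩ and ⟨·,·⟩'. If ⟨x,x⟩ ≤ ⟨x,x⟩' for all x ∈ V, then for any finite family x₁,…,xₙ ∈ V, the Gram determinants satisfy det(⟨xᵢ,xⱼ⟩) ≤ det(⟨xᵢ,xⱼ⟩'). -/

import Mathlib

/-!
Write `G` and `G'` for the two Gram matrices. Both `G` and `G' - G` are Gram matrices of
positive semidefinite forms (`B` and `B' - B`), so `G ≤ G'` in the Loewner order, and the
determinant is monotone on positive semidefinite matrices: when `G = Sᴴ S` is invertible,
`G' = Sᴴ (1 + C) S` with `C ≥ 0`, and `det (1 + C) = ∏ (1 + λᵢ) ≥ 1`.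
-/

open Matrix
open scoped ComplexOrder MatrixOrder

theorem LinearMap.BilinForm.IsPosSemidef.posSemidef_gram {R M ι : Type*} [CommRing R]
    [PartialOrder R] [StarRing R] [TrivialStar R] [AddCommMonoid M] [Module R M]
    {B : LinearMap.BilinForm R M} (hB : B.IsPosSemidef) (x : ι → M) :
    (Matrix.of fun i j => B (x i) (x j)).PosSemidef := by
  refine ⟨?_, fun c => ?_⟩
  · ext i j
    simp [hB.isSymm.eq (x i) (x j)]
  · have h := hB.isNonneg.nonneg (Finsupp.linearCombination R x c)
    simp only [Finsupp.linearCombination_apply, Finsupp.sum, map_sum, LinearMap.sum_apply,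
      map_smul, LinearMap.smul_apply, smul_eq_mul, Finset.mul_sum] at h
    simp only [Finsupp.sum, star_trivial, of_apply]
    rw [Finset.sum_comm] at h
    refine h.trans_eq (Finset.sum_congr rfl fun i _ => Finset.sum_congr rfl fun j _ => ?_)
    ring

namespace Matrix

variable {n 𝕜 : Type*} [Fintype n] [DecidableEq n] [RCLike 𝕜]

theorem PosSemidef.one_le_det_one_add {C : Matrix n n 𝕜} (hC : C.PosSemidef) :
    1 ≤ (1 + C).det := by
  have hspec : 1 + C = Unitary.conjStarAlgAut 𝕜 _ hC.1.eigenvectorUnitary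
      (diagonal fun i => 1 + (hC.1.eigenvalues i : 𝕜)) := by
    rw [← diagonal_add, diagonal_one, map_add, map_one]
    exact congrArg _ hC.1.spectral_theorem
  rw [hspec, Unitary.conjStarAlgAut_apply, det_mul, det_mul, mul_right_comm, ← det_mul,
    Unitary.mul_star_self_of_mem hC.1.eigenvectorUnitary.2, det_one, one_mul, det_diagonal]
  exact Finset.one_le_prod fun i _ => by simpa using hC.eigenvalues_nonneg i

theorem PosSemidef.det_le_det {A B : Matrix n n 𝕜} (hA : A.PosSemidef) (hAB : A ≤ B) :
    A.det ≤ B.det := by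
  obtain hAdet | hAdet := eq_or_ne A.det 0
  · exact hAdet ▸ add_sub_cancel A B ▸ (hA.add (le_iff.mp hAB)).det_nonneg
  obtain ⟨S, rfl⟩ := CStarAlgebra.nonneg_iff_eq_star_mul_self.mp hA.nonneg
  have hS : IsUnit S.det :=
    isUnit_iff_ne_zero.mpr <| right_ne_zero_of_mul (det_mul (star S) S ▸ hAdet)
  set C := (S⁻¹)ᴴ * (B - star S * S) * S⁻¹
  have hC : C.PosSemidef := (le_iff.mp hAB).conjTranspose_mul_mul_same S⁻¹
  have hSS : Sᴴ * (S⁻¹)ᴴ = 1 := by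
    rw [← conjTranspose_mul, nonsing_inv_mul S hS, conjTranspose_one]
  have hB : B = star S * (1 + C) * S := by
    rw [mul_add, add_mul, mul_one]
    simp only [C, ← mul_assoc, star_eq_conjTranspose, hSS, one_mul]
    rw [mul_assoc, nonsing_inv_mul _ hS, mul_one, add_sub_cancel]
  have hdetB : B.det = (star S * S).det * (1 + C).det := by
    rw [hB, det_mul, det_mul, mul_right_comm, ← det_mul]
  rw [hdetB]
  exact le_mul_of_one_le_right hA.det_nonneg hC.one_le_det_one_add

end Matrix

theorem gram_det_le_gram_det_general {V : Type*} [AddCommGroup V] [Module ℝ V]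
    (B B' : LinearMap.BilinForm ℝ V)
    (hBsymm : ∀ x y, B x y = B y x) (hB'symm : ∀ x y, B' x y = B' y x)
    (hBpos : ∀ x, x ≠ 0 → 0 < B x x)
    (hle : ∀ x, B x x ≤ B' x x)
    (n : ℕ) (x : Fin n → V) :
    (Matrix.of fun i j => B (x i) (x j)).det ≤
      (Matrix.of fun i j => B' (x i) (x j)).det := by
  have hB_isSymm : B.IsSymm := LinearMap.BilinForm.isSymm_def.mpr hBsymm
  have hB : B.IsPosSemidef := ⟨hB_isSymm, ⟨fun y => by
    obtain rfl | hy := eq_or_ne y 0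
    · simp
    · exact (hBpos y hy).le⟩⟩
  have hB'B : (B' - B).IsPosSemidef :=
    ⟨(LinearMap.BilinForm.isSymm_def.mpr hB'symm).sub hB_isSymm, ⟨fun y => sub_nonneg.mpr (hle y)⟩⟩
  have hgram_sub :
      (Matrix.of fun i j => B' (x i) (x j)) - (Matrix.of fun i j => B (x i) (x j)) =
        Matrix.of fun i j => (B' - B) (x i) (x j) := by
    ext i j
    simp
  refine (hB.posSemidef_gram x).det_le_det (le_iff.mpr ?_)
  rw [hgram_sub]
  exact hB'B.posSemidef_gram x

/-- Gram determinants: if one inner product dominates another on the diagonal,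
then Gram determinants are dominated as well. -/
theorem gram_det_le_gram_det {V : Type*} [AddCommGroup V] [Module ℝ V]
    (B B' : LinearMap.BilinForm ℝ V)
    (hBsymm : ∀ x y, B x y = B y x) (hB'symm : ∀ x y, B' x y = B' y x)
    (hBpos : ∀ x, x ≠ 0 → 0 < B x x) (hB'pos : ∀ x, x ≠ 0 → 0 < B' x x)
    (hle : ∀ x, B x x ≤ B' x x)
    (n : ℕ) (x : Fin n → V) :
    (Matrix.of fun i j => B (x i) (x j)).det ≤
      (Matrix.of fun i j => B' (x i) (x j)).det :=
  gram_det_le_gram_det_general B B' hBsymm hB'symm hBpos hle n x
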